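/- arXiv:math/0605226 — 2 statements merged into one kernel-verified Lean document; each statement's English description precedes it below -/
import Mathlib

section
/- Let S be a commutative ring, M an S-module, and t₁, t₂ ∈ S such that t₁ is a non-zero-divisor on S and the image of t₂ is a non-zero-divisor on S/t₁S. Then t₁ is a non-zero-divisor on the S-module Hom_S(M, S), and the image of t₂ is a non-zero-divisor on Hom_S(M, S) / t₁·Hom_S(M, S). In other words, if (t₁, t₂) is a weakly regular sequence on S, then it is a weakly regular sequence on Hom_S(M, S). -/
open Pointwise

/-- If `(t₁, t₂)` is a weakly regular sequence on `S`, then it is a weakly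
regular sequence on `Hom_S(M, S)`. -/
theorem regular_sequence_on_dual {S : Type*} [CommRing S]
    {M : Type*} [AddCommGroup M] [Module S M] (t₁ t₂ : S)
    (h₁ : ∀ s : S, t₁ * s = 0 → s = 0)
    (h₂ : ∀ s : S ⧸ Ideal.span {t₁}, t₂ • s = 0 → s = 0) :
    (∀ f : M →ₗ[S] S, t₁ • f = 0 → f = 0) ∧
    (∀ x : (M →ₗ[S] S) ⧸
        (Ideal.span {t₁} • (⊤ : Submodule S (M →ₗ[S] S))),
      t₂ • x = 0 → x = 0) := by
  constructor
  · intro f hf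
    ext m
    exact h₁ _ (by simpa using LinearMap.congr_fun hf m)
  · intro x hx
    obtain ⟨f, rfl⟩ := Submodule.Quotient.mk_surjective _ x
    rw [← Submodule.Quotient.mk_smul, Submodule.Quotient.mk_eq_zero,
      Submodule.ideal_span_singleton_smul] at hx
    obtain ⟨g, -, hg⟩ := Submodule.mem_map.mp hx
    have key : ∀ m : M, ∃ c : S, t₁ * c = f m := by
      intro m
      have hm : t₂ * f m = t₁ * g m := by
        simpa using (LinearMap.congr_fun hg m).symm
      have h0 : t₂ • (Submodule.Quotient.mk (f m) : S ⧸ Ideal.span {t₁}) = 0 := by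
        rw [← Submodule.Quotient.mk_smul, Submodule.Quotient.mk_eq_zero]
        show t₂ • f m ∈ Ideal.span {t₁}
        rw [smul_eq_mul, hm]
        exact Ideal.mul_mem_right _ _ (Ideal.mem_span_singleton_self t₁)
      have h3 := h₂ _ h0
      rw [Submodule.Quotient.mk_eq_zero, Ideal.mem_span_singleton] at h3
      obtain ⟨c, hc⟩ := h3
      exact ⟨c, hc.symm⟩
    choose c hc using key
    have hcancel : ∀ a b : S, t₁ * a = t₁ * b → a = b := by
      intro a b hab
      have : t₁ * (a - b) = 0 := by rw [mul_sub, hab, sub_self]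
      exact sub_eq_zero.mp (h₁ _ this)
    let h : M →ₗ[S] S :=
      { toFun := c
        map_add' := fun a b => by
          apply hcancel
          rw [mul_add, hc, hc, hc, map_add]
        map_smul' := fun s a => by
          apply hcancel
          simp only [RingHom.id_apply, smul_eq_mul]
          rw [hc, mul_left_comm, hc, map_smul, smul_eq_mul] }
    rw [Submodule.Quotient.mk_eq_zero, Submodule.ideal_span_singleton_smul]
    have : f = t₁ • h := by
      ext m
      simp [h, (hc m).symm]
    rw [this]
    exact Submodule.smul_mem_pointwise_smul _ _ _ Submodule.mem_top
end

section
/- Let R be a commutative ring and let 0 → R →ι E →π L → 0 be a short exact sequence of R-modules with L projective. Then the sequence 0 → E →μ Sym²(E) → Sym²(L) → 0 is exact, where μ : E → Sym²(E) is the R-linear map sending x to the class [ι(1) ⊗ x], and Sym²(E) → Sym²(L) is the map Sym²(π) induced by π. That is, μ is injective, Sym²(π) is surjective, and ker(Sym²(π)) = im(μ). -/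
open TensorProduct

/-- The submodule `W ⊆ N ⊗ N` generated by the elements `x ⊗ y - y ⊗ x`. -/
noncomputable def symRel (R : Type*) [CommRing R] (N : Type*) [AddCommGroup N]
    [Module R N] : Submodule R (N ⊗[R] N) :=
  Submodule.span R {z | ∃ x y : N, z = x ⊗ₜ[R] y - y ⊗ₜ[R] x}

/-- The symmetric square `Sym²(N) = (N ⊗ N)/W`. -/
noncomputable abbrev Sym2Mod (R : Type*) [CommRing R] (N : Type*) [AddCommGroup N]
    [Module R N] := (N ⊗[R] N) ⧸ symRel R N

/-- The map `Sym²(f) : Sym²(N) → Sym²(N')` induced by `f : N → N'`,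
sending `[x ⊗ y]` to `[f x ⊗ f y]`. -/
noncomputable def sym2Map {R : Type*} [CommRing R] {N N' : Type*}
    [AddCommGroup N] [Module R N] [AddCommGroup N'] [Module R N']
    (f : N →ₗ[R] N') : Sym2Mod R N →ₗ[R] Sym2Mod R N' :=
  Submodule.mapQ (symRel R N) (symRel R N') (TensorProduct.map f f)
    (by
      rw [symRel, Submodule.span_le]
      rintro z ⟨x, y, rfl⟩
      simp only [SetLike.mem_coe, Submodule.mem_comap, map_sub,
        TensorProduct.map_tmul]
      exact Submodule.subset_span ⟨f x, f y, rfl⟩)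

/-- If `0 → R →ι E →π L → 0` is a short exact sequence with `L` projective,
then `0 → E →μ Sym²(E) → Sym²(L) → 0` is exact, where `μ x = [ι(1) ⊗ x]`. -/
theorem sym2_of_extension_exact {R : Type*} [CommRing R] {E L : Type*}
    [AddCommGroup E] [Module R E] [AddCommGroup L] [Module R L]
    [Module.Projective R L]
    (ι : R →ₗ[R] E) (π : E →ₗ[R] L)
    (hι : Function.Injective ι) (hπ : Function.Surjective π)
    (hexact : LinearMap.ker π = LinearMap.range ι) :
    Function.Injective ((symRel R E).mkQ ∘ₗ TensorProduct.mk R E E (ι 1)) ∧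
    Function.Surjective (sym2Map π) ∧
    LinearMap.ker (sym2Map π)
      = LinearMap.range ((symRel R E).mkQ ∘ₗ TensorProduct.mk R E E (ι 1)) := by
  -- splitting s : L → E with π ∘ s = id
  obtain ⟨s, hs⟩ := Module.projective_lifting_property π (LinearMap.id : L →ₗ[R] L)
    hπ
  have hs' : ∀ l, π (s l) = l := fun l => congrFun (congrArg DFunLike.coe hs) l
  have hπι : ∀ r, π (ι r) = 0 := by
    intro r
    have : ι r ∈ LinearMap.ker π := by rw [hexact]; exact ⟨r, rfl⟩
    exact this
  -- retraction ρ : E → R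
  have hqmem : ∀ e : E, e - s (π e) ∈ LinearMap.range ι := by
    intro e
    rw [← hexact]
    simp [LinearMap.mem_ker, hs']
  let q : E →ₗ[R] LinearMap.range ι :=
    LinearMap.codRestrict (LinearMap.range ι) (LinearMap.id - s ∘ₗ π)
      (fun e => hqmem e)
  let eι := LinearEquiv.ofInjective ι hι
  let ρ : E →ₗ[R] R := (eι.symm : LinearMap.range ι →ₗ[R] R) ∘ₗ q
  have hιeq : ∀ x : LinearMap.range ι, ι (eι.symm x) = (x : E) := by
    intro x
    have := eι.apply_symm_apply x
    exact congrArg Subtype.val this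
  have hsplit : ∀ e : E, ι (ρ e) = e - s (π e) := by
    intro e
    show ι (eι.symm (q e)) = _
    rw [hιeq]
    rfl
  have hρι1 : ρ (ι 1) = 1 := by
    apply hι
    rw [hsplit, hπι]
    simp
  set μ := ((symRel R E).mkQ ∘ₗ TensorProduct.mk R E E (ι 1)) with hμ
  have hμ_apply : ∀ e, μ e = Submodule.Quotient.mk (ι 1 ⊗ₜ[R] e) := fun e => rfl
  -- left inverse ν of μ
  refine ⟨?_, ?_, ?_⟩
  · -- injectivity
    let B : E →ₗ[R] E →ₗ[R] E := LinearMap.mk₂ R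
      (fun x y => ρ x • y + ρ y • x - (ρ x * ρ y) • ι 1)
      (by intro x x' y; simp only [map_add, add_smul, add_mul]; module)
      (by intro c x y; simp only [map_smul, smul_eq_mul, mul_assoc]; module)
      (by intro x y y'; simp only [map_add, add_smul, mul_add]; module)
      (by intro c x y; simp only [map_smul, smul_eq_mul]
          rw [mul_comm (ρ x) (c * ρ y)]
          rw [mul_assoc, mul_comm (ρ y) (ρ x)]
          module)
    have hB : symRel R E ≤ LinearMap.ker (TensorProduct.lift B) := by
      rw [symRel, Submodule.span_le]
      rintro z ⟨x, y, rfl⟩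
      simp only [SetLike.mem_coe, LinearMap.mem_ker, map_sub, TensorProduct.lift.tmul]
      show (ρ x • y + ρ y • x - (ρ x * ρ y) • ι 1) -
        (ρ y • x + ρ x • y - (ρ y * ρ x) • ι 1) = 0
      rw [mul_comm (ρ y) (ρ x)]
      abel
    let ν : Sym2Mod R E →ₗ[R] E := Submodule.liftQ (symRel R E) (TensorProduct.lift B) hB
    have hνμ : ∀ e, ν (μ e) = e := by
      intro e
      rw [hμ_apply]
      show TensorProduct.lift B (ι 1 ⊗ₜ[R] e) = e
      rw [TensorProduct.lift.tmul]
      show ρ (ι 1) • e + ρ e • ι 1 - (ρ (ι 1) * ρ e) • ι 1 = e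
      rw [hρι1]
      simp
    exact Function.LeftInverse.injective hνμ
  · -- surjectivity
    intro z
    obtain ⟨t, rfl⟩ := Submodule.Quotient.mk_surjective _ z
    obtain ⟨t', rfl⟩ := TensorProduct.map_surjective hπ hπ t
    exact ⟨Submodule.Quotient.mk t', rfl⟩
  · -- kernel = range
    apply le_antisymm
    · -- hard direction
      have key : ∀ z : Sym2Mod R E,
          z - sym2Map s (sym2Map π z) ∈ LinearMap.range μ := by
        intro z
        obtain ⟨t, rfl⟩ := Submodule.Quotient.mk_surjective _ z
        induction t using TensorProduct.induction_on with
        | zero => simp only [Submodule.Quotient.mk_zero, map_zero, sub_zero]; exact zero_mem _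
        | add a b ha hb =>
          rw [Submodule.Quotient.mk_add]
          have : (Submodule.Quotient.mk a + Submodule.Quotient.mk b : Sym2Mod R E)
              - sym2Map s (sym2Map π (Submodule.Quotient.mk a + Submodule.Quotient.mk b))
              = (Submodule.Quotient.mk a - sym2Map s (sym2Map π (Submodule.Quotient.mk a)))
              + (Submodule.Quotient.mk b - sym2Map s (sym2Map π (Submodule.Quotient.mk b))) := by
            simp only [map_add]; abel
          rw [this]
          exact add_mem ha hb
        | tmul x y =>
          refine ⟨ρ x • y + ρ y • s (π x), ?_⟩
          rw [hμ_apply]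
          have h1 : sym2Map s (sym2Map π (Submodule.Quotient.mk (x ⊗ₜ[R] y)))
              = Submodule.Quotient.mk (s (π x) ⊗ₜ[R] s (π y)) := by
            simp only [sym2Map, Submodule.mapQ_apply, TensorProduct.map_tmul]
          rw [h1, ← Submodule.Quotient.mk_sub, Submodule.Quotient.eq]
          have hx : x = ι (ρ x) + s (π x) := by rw [hsplit]; abel
          have hy : y = ι (ρ y) + s (π y) := by rw [hsplit]; abel
          have e1 : ι 1 ⊗ₜ[R] (ρ x • y + ρ y • s (π x))
              = ι (ρ x) ⊗ₜ[R] y + ι (ρ y) ⊗ₜ[R] s (π x) := by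
            rw [tmul_add, tmul_smul, tmul_smul, smul_tmul', smul_tmul',
              ← map_smul, ← map_smul, smul_eq_mul, smul_eq_mul, mul_one, mul_one]
          rw [e1]
          have e2 : ∀ a1 a2 b1 b2 : E,
              (a1 ⊗ₜ[R] (b1 + b2) + b1 ⊗ₜ[R] a2)
              - ((a1 + a2) ⊗ₜ[R] (b1 + b2) - a2 ⊗ₜ[R] b2)
              = b1 ⊗ₜ[R] a2 - a2 ⊗ₜ[R] b1 := by
            intro a1 a2 b1 b2
            simp only [add_tmul, tmul_add]
            abel
          have h3 := e2 (ι (ρ x)) (s (π x)) (ι (ρ y)) (s (π y))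
          rw [← hx, ← hy] at h3
          rw [h3]
          exact Submodule.subset_span ⟨ι (ρ y), s (π x), rfl⟩
      intro z hz
      rw [LinearMap.mem_ker] at hz
      have := key z
      rwa [hz, map_zero, sub_zero] at this
    · rintro _ ⟨e, rfl⟩
      rw [LinearMap.mem_ker, hμ_apply]
      show sym2Map π (Submodule.Quotient.mk (ι 1 ⊗ₜ[R] e)) = 0
      simp only [sym2Map, Submodule.mapQ_apply, TensorProduct.map_tmul, hπι,
        TensorProduct.zero_tmul]
      rfl
end
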